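/- For every n ≥ 6 and every subset D ⊆ [n]\{1,2,3,4} with |D| ≥ 2, the 3-graph H_2 satisfies λ(H_2) ≤ √3/18, where H_2 is the 3-graph on vertex set [n] whose edge set is ( {e ⊆ [n] : |e|=3, e ∩ {1,2} ≠ ∅} \ {{2,i,j} : i,j ∈ D, i ≠ j} ) ∪ {{3,4,i} : i ∈ D}. -/

import Mathlib

/-!
Write `x, y` for the weights of the vertices `1, 2`, and `a`, `d` for the total weights of
`[3, n] \ D` and of `D`. Splitting the edges of `H_2` into those through `1`, those through `2`
but not `1`, and the triples `{3, 4, i}`, the Lagrangian becomes a function of `x, y, a, d` and of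
the sums of squared weights. Bounding the latter by means of `u = w₃ + w₄` gives
`λ(H_2, w) ≤ h2Majorant x y a d u`. If `d ≤ x + y`, the majorant is at most `(s - s³) / 4` with
`s = a + d`, whose maximum, attained at `s = 1 / √3`, is exactly `√3 / 18`. If `d ≥ x + y`, then
`u ≤ a` bounds the majorant by `9 / 100 < √3 / 18`.
-/

open Finset

/-- An `r`-uniform hypergraph (r-graph) with vertices drawn from `ℕ`. -/
structure HyperGraph (r : ℕ) where
  verts : Finset ℕ
  edges : Finset (Finset ℕ)
  edges_sub : ∀ e ∈ edges, e ⊆ verts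
  card_eq : ∀ e ∈ edges, e.card = r

/-- A 3-uniform hypergraph (3-graph). -/
abbrev ThreeGraph := HyperGraph 3

/-- A feasible weight vector on `G`: nonnegative weights on the vertices summing to 1. -/
def HyperGraph.IsFeasible {r : ℕ} (G : HyperGraph r) (w : ℕ → ℝ) : Prop :=
  (∀ v ∈ G.verts, 0 ≤ w v) ∧ ∑ v ∈ G.verts, w v = 1

/-- The Lagrangian function `λ(G, w) = Σ_{e ∈ E(G)} Π_{v ∈ e} w v`. -/
noncomputable def HyperGraph.lagFun {r : ℕ} (G : HyperGraph r) (w : ℕ → ℝ) : ℝ :=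
  ∑ e ∈ G.edges, ∏ v ∈ e, w v

/-- The Lagrangian `λ(G)`: the maximum of `λ(G, w)` over feasible weight vectors. -/
noncomputable def HyperGraph.lag {r : ℕ} (G : HyperGraph r) : ℝ :=
  sSup {x : ℝ | ∃ w, G.IsFeasible w ∧ G.lagFun w = x}

/-- `G` contains a copy of `F`: an injection of the vertices of `F` into those of `G`
mapping every edge of `F` to an edge of `G`. -/
def HyperGraph.ContainsCopy {r : ℕ} (G F : HyperGraph r) : Prop :=
  ∃ f : ℕ → ℕ, Set.InjOn f ↑F.verts ∧ (∀ v ∈ F.verts, f v ∈ G.verts) ∧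
    ∀ e ∈ F.edges, e.image f ∈ G.edges

/-- `G` is `F`-free. -/
def HyperGraph.Free {r : ℕ} (G F : HyperGraph r) : Prop := ¬ G.ContainsCopy F

/-- `H` is a subgraph of `G`. -/
def HyperGraph.IsSubgraph {r : ℕ} (H G : HyperGraph r) : Prop :=
  H.verts ⊆ G.verts ∧ H.edges ⊆ G.edges

/-- `G` is dense: every proper subgraph has strictly smaller Lagrangian. -/
def HyperGraph.LagDense {r : ℕ} (G : HyperGraph r) : Prop :=
  ∀ H : HyperGraph r, H.IsSubgraph G → (H.verts ≠ G.verts ∨ H.edges ≠ G.edges) →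
    H.lag < G.lag

/-- The Lagrangian density `π_λ(F) = sup { r! · λ(G) : G is F-free }`. -/
noncomputable def lagDensity {r : ℕ} (F : HyperGraph r) : ℝ :=
  sSup {x : ℝ | ∃ G : HyperGraph r, G.Free F ∧ x = (Nat.factorial r : ℝ) * G.lag}

/-- An optimum weight vector for `G`. -/
def HyperGraph.IsOptimal {r : ℕ} (G : HyperGraph r) (w : ℕ → ℝ) : Prop :=
  G.IsFeasible w ∧ G.lagFun w = G.lag

/-- `K_4^3 ∪ e`: the disjoint union of the complete 3-graph on `{1,2,3,4}`
and the single edge `{5,6,7}`. -/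
def K43e : ThreeGraph where
  verts := {1, 2, 3, 4, 5, 6, 7}
  edges := {{1, 2, 3}, {1, 2, 4}, {1, 3, 4}, {2, 3, 4}, {5, 6, 7}}
  edges_sub := by decide
  card_eq := by decide

/-- `H_2` (for `n ≥ 6` and `D ⊆ [n] \ {1,2,3,4}`): the 3-graph on `[n]` whose edges are
the 3-subsets meeting `{1, 2}`, minus all edges `{2, i, j}` with `i, j ∈ D`, `i ≠ j`,
plus the edges `{3, 4, i}` for `i ∈ D`. -/
def H2 (n : ℕ) (D : Finset ℕ) (hn : 6 ≤ n)
    (hD : D ⊆ Finset.Icc 1 n \ ({1, 2, 3, 4} : Finset ℕ)) : ThreeGraph where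
  verts := Finset.Icc 1 n
  edges := ((((Finset.Icc 1 n).powersetCard 3).filter
        (fun e => (e ∩ ({1, 2} : Finset ℕ)).Nonempty)) \
      ((D.powersetCard 2).image (insert 2))) ∪
    D.image (fun i => {3, 4, i})
  edges_sub := by
    intro e he
    rw [Finset.mem_union] at he
    rcases he with h | h
    · have h' := (Finset.mem_sdiff.mp h).1
      rw [Finset.mem_filter, Finset.mem_powersetCard] at h'
      exact h'.1.1
    · obtain ⟨i, hi, rfl⟩ := Finset.mem_image.mp h
      have hi' := hD hi
      rw [Finset.mem_sdiff, Finset.mem_Icc] at hi'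
      intro v hv
      simp only [Finset.mem_insert, Finset.mem_singleton] at hv
      rw [Finset.mem_Icc]
      rcases hv with rfl | rfl | rfl
      · omega
      · omega
      · exact hi'.1
  card_eq := by
    intro e he
    rw [Finset.mem_union] at he
    rcases he with h | h
    · have h' := (Finset.mem_sdiff.mp h).1
      rw [Finset.mem_filter, Finset.mem_powersetCard] at h'
      exact h'.1.2
    · obtain ⟨i, hi, rfl⟩ := Finset.mem_image.mp h
      have hi' := hD hi
      simp only [Finset.mem_sdiff, Finset.mem_insert, Finset.mem_singleton] at hi'
      have h3 : (3 : ℕ) ∉ ({4, i} : Finset ℕ) := by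
        simp only [Finset.mem_insert, Finset.mem_singleton]
        omega
      have h4 : (4 : ℕ) ∉ ({i} : Finset ℕ) := by
        simp only [Finset.mem_singleton]
        omega
      rw [Finset.card_insert_of_notMem h3, Finset.card_insert_of_notMem h4,
        Finset.card_singleton]

section PowersetCard

variable {ι : Type*} [DecidableEq ι]

theorem Finset.sum_image_insert_powersetCard {M : Type*} [AddCommMonoid M] {t : ι}
    {T : Finset ι} (ht : t ∉ T) (k : ℕ) (f : Finset ι → M) :
    ∑ e ∈ (T.powersetCard k).image (insert t), f e = ∑ e ∈ T.powersetCard k, f (insert t e) :=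
  sum_image <| insert_erase_invOn.2.injOn.mono fun _ he ↦
    notMem_mono (mem_powersetCard.1 he).1 ht

theorem Finset.sum_powersetCard_succ_insert {M : Type*} [AddCommMonoid M] {t : ι}
    {T : Finset ι} (ht : t ∉ T) (k : ℕ) (f : Finset ι → M) :
    ∑ e ∈ (insert t T).powersetCard (k + 1), f e =
      ∑ e ∈ T.powersetCard (k + 1), f e + ∑ e ∈ T.powersetCard k, f (insert t e) := by
  rw [powersetCard_succ_insert ht, sum_union, sum_image_insert_powersetCard ht]
  aesop (add simp [disjoint_left, insert_subset_iff])

theorem Finset.sq_sum_eq_sum_sq_add_two_mul_sum_powersetCard_two {R : Type*} [CommSemiring R]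
    (T : Finset ι) (w : ι → R) :
    (∑ v ∈ T, w v) ^ 2 = ∑ v ∈ T, w v ^ 2 + 2 * ∑ e ∈ T.powersetCard 2, ∏ v ∈ e, w v := by
  induction T using Finset.induction_on with
  | empty => rw [powersetCard_eq_empty.2 (by simp)]; simp
  | insert t T ht ih =>
    rw [sum_powersetCard_succ_insert ht 1, powersetCard_one, sum_map, sum_insert ht,
      sum_insert ht, add_sq, ih]
    have hpairs : ∑ v ∈ T, ∏ x ∈ {t, v}, w x = w t * ∑ v ∈ T, w v := by
      rw [mul_sum]
      exact sum_congr rfl fun v hv ↦ prod_pair (ne_of_mem_of_not_mem hv ht).symm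
    simp only [Function.Embedding.coeFn_mk, hpairs]
    ring

end PowersetCard

section Inequalities

theorem sub_pow_three_le_two_mul_sqrt_three_div_nine {s : ℝ} (hs : 0 ≤ s) :
    s - s ^ 3 ≤ 2 * √3 / 9 := by
  have h3 : √3 ^ 2 = 3 := Real.sq_sqrt (by norm_num)
  linear_combination mul_nonneg (sq_nonneg (s - √3 / 3)) (by positivity : 0 ≤ s + 2 * √3 / 3)
    + (2 * √3 / 27 - s / 3) * h3

noncomputable def h2Majorant (x y a d u : ℝ) : ℝ :=
  x * y * (a + d) + (x + y) * (a + d) ^ 2 / 2 - y * d ^ 2 / 2 + u ^ 2 * (d - (x + y)) / 4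

theorem h2Majorant_le_of_le_add {x y a d u : ℝ} (hy : 0 ≤ y) (ha : 0 ≤ a)
    (hd : 0 ≤ d) (hsum : x + y + a + d = 1) (hdxy : d ≤ x + y) :
    h2Majorant x y a d u ≤ √3 / 18 := by
  obtain rfl : x = 1 - y - a - d := by linarith
  have hcube := sub_pow_three_le_two_mul_sqrt_three_div_nine (add_nonneg ha hd)
  unfold h2Majorant
  linear_combination hcube / 4 + (a + d) / 4 * sq_nonneg (1 - y - a - d - y)
    + y / 2 * sq_nonneg d + mul_nonneg (sq_nonneg u) (sub_nonneg.2 hdxy) / 4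

theorem h2Majorant_le_of_add_le {x y a d : ℝ} (hx : 0 ≤ x) (hy : 0 ≤ y) (ha : 0 ≤ a)
    (hsum : x + y + a + d = 1) (hxyd : x + y ≤ d) :
    h2Majorant x y a d a ≤ 9 / 100 := by
  obtain ⟨t, ht, rfl⟩ : ∃ t, 0 ≤ t ∧ d = x + y + t := ⟨d - (x + y), by linarith, by ring⟩
  have hc : 0 ≤ 87/100*x + 129/100*y + 323/500*a := by positivity
  unfold h2Majorant
  -- `9/100 * (x + y + a + d) ^ 3 - h2Majorant x y a d a` is this nonnegative combination
  linear_combination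
    2/25 * mul_nonneg ha (sq_nonneg (x - y)) + 1/25 * mul_nonneg hx (sq_nonneg (y - a))
      + 1/25 * mul_nonneg hy (sq_nonneg (x - a))
      + 1300000/10875087 * mul_nonneg hc (add_nonneg (add_nonneg
          (sq_nonneg (87/100*x - 129/100*y)) (sq_nonneg (129/100*y - 323/500*a)))
          (sq_nonneg (323/500*a - 87/100*x)))
      + 9/100 * pow_nonneg ht 3 + 27/100 * mul_nonneg ha (sq_nonneg t)
      + 1/50 * mul_nonneg (sq_nonneg a) ht + 2150417/84172500 * pow_nonneg ha 3
      + 27/50 * mul_nonneg hy (sq_nonneg t) + 2/25 * mul_nonneg (mul_nonneg hy ha) ht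
      + 27/25 * mul_nonneg (sq_nonneg y) ht + 48421/234175 * pow_nonneg hy 3
      + 1/25 * mul_nonneg hx (sq_nonneg t) + 2/25 * mul_nonneg (mul_nonneg hx ha) ht
      + 4/25 * mul_nonneg (mul_nonneg hx hy) ht + 31/50 * mul_nonneg hx (sq_nonneg y)
      + 2/25 * mul_nonneg (sq_nonneg x) ht + 3/25 * mul_nonneg (sq_nonneg x) hy
      + 43449/694450 * pow_nonneg hx 3
      + 9/100 * ((x + y + a + (x + y + t)) ^ 2 + (x + y + a + (x + y + t)) + 1) * hsum

theorem h2Majorant_le_sqrt_three_div_eighteen {x y a d u : ℝ} (hx : 0 ≤ x) (hy : 0 ≤ y)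
    (hd : 0 ≤ d) (hu : 0 ≤ u) (hua : u ≤ a) (hsum : x + y + a + d = 1) :
    h2Majorant x y a d u ≤ √3 / 18 := by
  have ha : 0 ≤ a := hu.trans hua
  rcases le_total d (x + y) with hdxy | hxyd
  · exact h2Majorant_le_of_le_add hy ha hd hsum hdxy
  · have hmono : h2Majorant x y a d u ≤ h2Majorant x y a d a := by
      unfold h2Majorant
      gcongr
    have h3 : (1.62 : ℝ) ≤ √3 := Real.le_sqrt_of_sq_le (by norm_num)
    linarith [h2Majorant_le_of_add_le hx hy ha hsum hxyd]

theorem weight_form_le_h2Majorant {x y a d b c qA qD : ℝ} (hx : 0 ≤ x) (hy : 0 ≤ y)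
    (hd : 0 ≤ d) (hqA : b ^ 2 + c ^ 2 ≤ qA) (hqD : 0 ≤ qD) :
    x * ((y + (a + d)) ^ 2 - y ^ 2 - qA - qD) / 2 + y * ((a + d) ^ 2 - d ^ 2 - qA) / 2
      + b * c * d ≤ h2Majorant x y a d (b + c) := by
  unfold h2Majorant
  linear_combination mul_nonneg (add_nonneg hx hy) (sub_nonneg.2 hqA) / 2
    + mul_nonneg (add_nonneg hx hy) (sq_nonneg (b - c)) / 4 + mul_nonneg hx hqD / 2
    + mul_nonneg hd (sq_nonneg (b - c)) / 4

end Inequalities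

section H2

theorem sum_prod_triples_meeting_one_two {n : ℕ} (hn : 2 ≤ n) (w : ℕ → ℝ) :
    ∑ e ∈ ((Icc 1 n).powersetCard 3).filter (fun e => (e ∩ ({1, 2} : Finset ℕ)).Nonempty),
        ∏ v ∈ e, w v =
      w 1 * ∑ e ∈ (Icc 2 n).powersetCard 2, ∏ v ∈ e, w v
        + w 2 * ∑ e ∈ (Icc 3 n).powersetCard 2, ∏ v ∈ e, w v := by
  have h1 : 1 ∉ Icc 2 n := by simp
  have h2 : 2 ∉ Icc 3 n := by simp
  have hsplit (f : Finset ℕ → ℝ) : ∑ e ∈ (Icc 1 n).powersetCard 3, f e =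
      ∑ e ∈ (Icc 3 n).powersetCard 3, f e + ∑ e ∈ (Icc 3 n).powersetCard 2, f (insert 2 e)
        + ∑ e ∈ (Icc 2 n).powersetCard 2, f (insert 1 e) := by
    have e1 : Icc 1 n = insert 1 (Icc 2 n) := (insert_Icc_add_one_left_eq_Icc (by omega)).symm
    have e2 : Icc 2 n = insert 2 (Icc 3 n) := (insert_Icc_add_one_left_eq_Icc hn).symm
    rw [e1, sum_powersetCard_succ_insert h1, e2, sum_powersetCard_succ_insert h2, ← e2]
  rw [sum_filter, hsplit, sum_eq_zero, zero_add, add_comm, mul_sum, mul_sum]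
  · congr 1 <;> refine sum_congr rfl fun e he => ?_
    · have : 1 ∉ e := fun h => h1 ((mem_powersetCard.1 he).1 h)
      rw [if_pos ⟨1, by simp⟩, prod_insert this]
    · have : 2 ∉ e := fun h => h2 ((mem_powersetCard.1 he).1 h)
      rw [if_pos ⟨2, by simp⟩, prod_insert this]
  · intro e he
    rw [if_neg]
    rintro ⟨v, hv⟩
    have := (mem_powersetCard.1 he).1 (mem_inter.1 hv).1
    simp only [mem_inter, mem_insert, mem_singleton, mem_Icc] at hv this
    omega

theorem sum_Icc_one_eq_add_add_sum_Icc_three {M : Type*} [AddCommMonoid M] {n : ℕ} (hn : 2 ≤ n)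
    (f : ℕ → M) : ∑ v ∈ Icc 1 n, f v = f 1 + f 2 + ∑ v ∈ Icc 3 n, f v := by
  have e1 : Icc 1 n = insert 1 (Icc 2 n) := (insert_Icc_add_one_left_eq_Icc (by omega)).symm
  have e2 : Icc 2 n = insert 2 (Icc 3 n) := (insert_Icc_add_one_left_eq_Icc hn).symm
  rw [e1, e2, sum_insert (by simp), sum_insert (by simp), add_assoc]

theorem subset_Icc_five_of_subset_sdiff {n : ℕ} {D : Finset ℕ}
    (hD : D ⊆ Icc 1 n \ ({1, 2, 3, 4} : Finset ℕ)) : D ⊆ Icc 5 n := by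
  intro i hi
  have := hD hi
  simp only [mem_sdiff, mem_Icc, mem_insert, mem_singleton] at this ⊢
  omega

theorem sum_prod_image_insert_three_four {D : Finset ℕ} (h3 : 3 ∉ D) (h4 : 4 ∉ D)
    (w : ℕ → ℝ) :
    ∑ e ∈ D.image (fun i => {3, 4, i}), ∏ v ∈ e, w v = w 3 * w 4 * ∑ i ∈ D, w i := by
  have hne : ∀ i ∈ D, i ≠ 3 ∧ i ≠ 4 := fun i hi => ⟨ne_of_mem_of_not_mem hi h3,
    ne_of_mem_of_not_mem hi h4⟩
  have hinj : Set.InjOn (fun i => ({3, 4, i} : Finset ℕ)) D := by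
    intro i hi j hj hij
    have hmem : i ∈ ({3, 4, j} : Finset ℕ) := by
      rw [← show ({3, 4, i} : Finset ℕ) = {3, 4, j} from hij]
      simp
    simp only [mem_insert, mem_singleton] at hmem
    have := hne i hi
    omega
  rw [sum_image hinj, mul_sum]
  refine sum_congr rfl fun i hi => ?_
  have := hne i hi
  rw [prod_insert (by simp only [mem_insert, mem_singleton]; omega), prod_pair (by omega),
    mul_assoc]

theorem lagFun_H2 {n : ℕ} {D : Finset ℕ} (hn : 6 ≤ n)
    (hD : D ⊆ Icc 1 n \ ({1, 2, 3, 4} : Finset ℕ)) (w : ℕ → ℝ) :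
    (H2 n D hn hD).lagFun w =
      w 1 * ∑ e ∈ (Icc 2 n).powersetCard 2, ∏ v ∈ e, w v
        + w 2 * (∑ e ∈ (Icc 3 n).powersetCard 2, ∏ v ∈ e, w v
          - ∑ e ∈ D.powersetCard 2, ∏ v ∈ e, w v)
        + w 3 * w 4 * ∑ i ∈ D, w i := by
  have hD5 := subset_Icc_five_of_subset_sdiff hD
  have h2D : 2 ∉ D := fun h => by simpa using hD5 h
  have h3D : 3 ∉ D := fun h => by simpa using hD5 h
  have h4D : 4 ∉ D := fun h => by simpa using hD5 h
  have hdisj : Disjoint (((Icc 1 n).powersetCard 3).filter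
        (fun e => (e ∩ ({1, 2} : Finset ℕ)).Nonempty) \ (D.powersetCard 2).image (insert 2))
      (D.image fun i => {3, 4, i}) := by
    refine disjoint_left.2 fun e he he' => ?_
    obtain ⟨i, hi, rfl⟩ := mem_image.1 he'
    obtain ⟨v, hv⟩ := (mem_filter.1 (mem_sdiff.1 he).1).2
    have := hD5 hi
    simp only [mem_inter, mem_insert, mem_singleton, mem_Icc] at hv this
    omega
  have hsub : (D.powersetCard 2).image (insert 2) ⊆ ((Icc 1 n).powersetCard 3).filter
        (fun e => (e ∩ ({1, 2} : Finset ℕ)).Nonempty) := by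
    intro e he
    obtain ⟨p, hp, rfl⟩ := mem_image.1 he
    obtain ⟨hpD, hp2⟩ := mem_powersetCard.1 hp
    refine mem_filter.2
      ⟨mem_powersetCard.2 ⟨insert_subset (mem_Icc.2 ⟨by norm_num, by omega⟩) ?_, ?_⟩, ⟨2, by simp⟩⟩
    · exact hpD.trans (hD5.trans (Icc_subset_Icc_left (by norm_num)))
    · rw [card_insert_of_notMem (fun h => h2D (hpD h)), hp2]
  have hR : ∑ e ∈ D.powersetCard 2, ∏ v ∈ insert 2 e, w v =
      w 2 * ∑ e ∈ D.powersetCard 2, ∏ v ∈ e, w v := by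
    rw [mul_sum]
    exact sum_congr rfl fun e he => prod_insert fun h => h2D ((mem_powersetCard.1 he).1 h)
  dsimp only [HyperGraph.lagFun, H2]
  rw [sum_union hdisj, sum_sdiff_eq_sub hsub, sum_prod_triples_meeting_one_two (by omega),
    sum_image_insert_powersetCard h2D, hR, sum_prod_image_insert_three_four h3D h4D]
  ring

theorem lagFun_H2_eq_sums {n : ℕ} {D : Finset ℕ} (hn : 6 ≤ n)
    (hD : D ⊆ Icc 1 n \ ({1, 2, 3, 4} : Finset ℕ)) (w : ℕ → ℝ) :
    (H2 n D hn hD).lagFun w =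
      w 1 * ((w 2 + (∑ v ∈ Icc 3 n \ D, w v + ∑ v ∈ D, w v)) ^ 2 - w 2 ^ 2
          - ∑ v ∈ Icc 3 n \ D, w v ^ 2 - ∑ v ∈ D, w v ^ 2) / 2
        + w 2 * ((∑ v ∈ Icc 3 n \ D, w v + ∑ v ∈ D, w v) ^ 2 - (∑ v ∈ D, w v) ^ 2
          - ∑ v ∈ Icc 3 n \ D, w v ^ 2) / 2
        + w 3 * w 4 * ∑ v ∈ D, w v := by
  have hD3 : D ⊆ Icc 3 n :=
    (subset_Icc_five_of_subset_sdiff hD).trans (Icc_subset_Icc_left (by norm_num))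
  have h2 : Icc 2 n = insert 2 (Icc 3 n) := (insert_Icc_add_one_left_eq_Icc (by omega)).symm
  have h2' : 2 ∉ Icc 3 n := by simp
  have e2 := sq_sum_eq_sum_sq_add_two_mul_sum_powersetCard_two (Icc 2 n) w
  have e3 := sq_sum_eq_sum_sq_add_two_mul_sum_powersetCard_two (Icc 3 n) w
  have eD := sq_sum_eq_sum_sq_add_two_mul_sum_powersetCard_two D w
  rw [h2, sum_insert h2', sum_insert h2', ← h2] at e2
  rw [← sum_sdiff hD3 (f := fun v => w v ^ 2)] at e2 e3
  rw [lagFun_H2, sum_sdiff hD3]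
  linear_combination -(w 1 / 2 * e2 + w 2 / 2 * (e3 - eD))

end H2

theorem lag_H2_general (n : ℕ) (D : Finset ℕ) (hn : 6 ≤ n)
    (hD : D ⊆ Finset.Icc 1 n \ ({1, 2, 3, 4} : Finset ℕ)) :
    (H2 n D hn hD).lag ≤ Real.sqrt 3 / 18 := by
  refine Real.sSup_le ?_ (by positivity)
  rintro _ ⟨w, ⟨hw0, hw1⟩, rfl⟩
  change ∀ v ∈ Icc 1 n, 0 ≤ w v at hw0
  change ∑ v ∈ Icc 1 n, w v = 1 at hw1
  have hD5 := subset_Icc_five_of_subset_sdiff hD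
  have hD3 : D ⊆ Icc 3 n := hD5.trans (Icc_subset_Icc_left (by norm_num))
  have hw : ∀ v ∈ Icc 3 n, 0 ≤ w v := fun v hv => hw0 v (Icc_subset_Icc_left (by norm_num) hv)
  have hwA : ∀ v ∈ Icc 3 n \ D, 0 ≤ w v := fun v hv => hw v (sdiff_subset hv)
  have hx : 0 ≤ w 1 := hw0 1 (mem_Icc.2 ⟨le_rfl, by omega⟩)
  have hy : 0 ≤ w 2 := hw0 2 (mem_Icc.2 ⟨by norm_num, by omega⟩)
  have hd : 0 ≤ ∑ v ∈ D, w v := sum_nonneg fun v hv => hw v (hD3 hv)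
  have h3 : 3 ∈ Icc 3 n \ D :=
    mem_sdiff.2 ⟨mem_Icc.2 ⟨le_rfl, by omega⟩, fun h => by simpa using hD5 h⟩
  have h4 : 4 ∈ Icc 3 n \ D :=
    mem_sdiff.2 ⟨mem_Icc.2 ⟨by norm_num, by omega⟩, fun h => by simpa using hD5 h⟩
  have hsum : w 1 + w 2 + ∑ v ∈ Icc 3 n \ D, w v + ∑ v ∈ D, w v = 1 := by
    rw [← hw1, sum_Icc_one_eq_add_add_sum_Icc_three (by omega), ← sum_sdiff hD3, add_assoc]
  rw [lagFun_H2_eq_sums]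
  calc _ ≤ h2Majorant (w 1) (w 2) (∑ v ∈ Icc 3 n \ D, w v) (∑ v ∈ D, w v) (w 3 + w 4) :=
        weight_form_le_h2Majorant hx hy hd
          (add_le_sum (fun v _ => sq_nonneg (w v)) h3 h4 (by norm_num))
          (sum_nonneg fun v _ => sq_nonneg (w v))
    _ ≤ √3 / 18 := h2Majorant_le_sqrt_three_div_eighteen hx hy hd
          (add_nonneg (hwA 3 h3) (hwA 4 h4)) (add_le_sum hwA h3 h4 (by norm_num)) hsum

/-- For every `n ≥ 6` and every `D ⊆ [n] \ {1,2,3,4}` with `|D| ≥ 2`,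
`λ(H_2) ≤ √3/18`. -/
theorem lag_H2 (n : ℕ) (D : Finset ℕ) (hn : 6 ≤ n)
    (hD : D ⊆ Finset.Icc 1 n \ ({1, 2, 3, 4} : Finset ℕ)) (hcard : 2 ≤ D.card) :
    (H2 n D hn hD).lag ≤ Real.sqrt 3 / 18 :=
  lag_H2_general n D hn hD
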